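/- arXiv:1401.7313 — 5 statements merged into one kernel-verified Lean document; each statement's English description precedes it below -/
import Mathlib

section
/- Define Enc(x) = 01 ∘ x ∘ complement(wt(x)₂), where wt(x) is the number of 1s in x and wt(x)₂ is its binary encoding zero-padded to length ⌈log₂(|x|+1)⌉. Then for all binary strings x, y of equal length with x ≠ y, both tuples (0,1) and (1,0) occur coordinatewise between Enc(x) and Enc(y). -/
/-!
If `(1,0)` does not occur between `x` and `y`, then
`x ≤ y` coordinatewise, so `wt x < wt y`, and some bit is `0` in `wt(x)₂` and `1` in `wt(y)₂`.
That bit lies within the padded length because `wt y ≤ |y|`, and complementing the suffix turns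
it into a `(1,0)`. Hence `(1,0)` always occurs, and `(0,1)` follows by exchanging `x` and `y`.
-/

theorem Nat.exists_testBit_false_true_of_lt {m n : ℕ} (h : m < n) :
    ∃ i, m.testBit i = false ∧ n.testBit i = true := by
  by_contra! hbits
  have hsub : n &&& m = n := Nat.eq_of_testBit_eq fun i => by
    cases hn : n.testBit i
    · simp [hn]
    · have hm : m.testBit i = true := by
        by_contra hm
        exact hbits i (by simpa using hm) hn
      simp [hn, hm]
  exact absurd (hsub ▸ Nat.and_le_right) h.not_ge

theorem Nat.lt_clog_of_testBit {n L i : ℕ} (hn : n ≤ L) (hi : n.testBit i = true) :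
    i < Nat.clog 2 (L + 1) :=
  (Nat.lt_clog_iff_pow_lt one_lt_two).2 (by have := Nat.ge_two_pow_of_testBit hi; omega)

theorem List.count_true_lt_of_not_mem_zip {x y : List Bool} (hlen : x.length = y.length)
    (hne : x ≠ y) (hxy : (true, false) ∉ x.zip y) : x.count true < y.count true := by
  induction x generalizing y with
  | nil => cases y <;> simp_all
  | cons a xs ih =>
    cases y with
    | nil => simp at hlen
    | cons b ys =>
      simp only [List.zip_cons_cons, List.mem_cons, not_or] at hxy
      obtain ⟨hab, htail⟩ := hxy
      simp only [List.count_cons, beq_iff_eq]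
      rcases eq_or_ne xs ys with rfl | hne'
      · cases a <;> cases b <;> simp_all
      · have := ih (by simpa using hlen) hne' htail
        cases a <;> cases b <;>
          simp_all only [Bool.false_eq_true, if_false, if_true, ne_eq, not_true_eq_false] <;> omega

def weightEncode (z : List Bool) : List Bool :=
  [false, true] ++ z ++
    (List.range (Nat.clog 2 (z.length + 1))).map (fun i => !(Nat.testBit (z.count true) i))

theorem zip_weightEncode {x y : List Bool} (hlen : x.length = y.length) :
    (weightEncode x).zip (weightEncode y) =
      [(false, false), (true, true)] ++ x.zip y ++
        (List.range (Nat.clog 2 (x.length + 1))).map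
          (fun i => (!(Nat.testBit (x.count true) i), !(Nat.testBit (y.count true) i))) := by
  rw [weightEncode, weightEncode, List.zip_append (by simp [hlen]), List.zip_append (by simp),
    ← hlen, List.zip_map']
  rfl

theorem true_false_mem_zip_weightEncode {x y : List Bool} (hlen : x.length = y.length)
    (hne : x ≠ y) : (true, false) ∈ (weightEncode x).zip (weightEncode y) := by
  rw [zip_weightEncode hlen]
  by_cases hxy : (true, false) ∈ x.zip y
  · simp [hxy]
  obtain ⟨i, hxi, hyi⟩ :=
    Nat.exists_testBit_false_true_of_lt (List.count_true_lt_of_not_mem_zip hlen hne hxy)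
  have hi : i < Nat.clog 2 (x.length + 1) :=
    Nat.lt_clog_of_testBit (hlen ▸ List.count_le_length) hyi
  simp only [List.mem_append, List.mem_map, List.mem_range]
  exact Or.inr ⟨i, hi, by simp [hxi, hyi]⟩

/-- For `Enc x = 01 ∘ x ∘ complement (wt(x)₂)`, where `wt(x)₂` is the binary
encoding of the Hamming weight of `x` zero-padded to length `⌈log₂ (|x|+1)⌉`:
if `x ≠ y` have equal length then both `(0,1)` and `(1,0)` occur
coordinatewise between `Enc x` and `Enc y`. -/
theorem encode_weight_diamond_one (x y : List Bool) (hlen : x.length = y.length)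
    (hne : x ≠ y) :
    let Enc : List Bool → List Bool := fun z =>
      [false, true] ++ z ++
        (List.range (Nat.clog 2 (z.length + 1))).map
          (fun i => !(Nat.testBit (z.count true) i))
    ((false, true) ∈ (Enc x).zip (Enc y)) ∧ ((true, false) ∈ (Enc x).zip (Enc y)) := by
  show (false, true) ∈ (weightEncode x).zip (weightEncode y) ∧
    (true, false) ∈ (weightEncode x).zip (weightEncode y)
  have hyx := List.mem_map_of_mem (f := Prod.swap)
    (true_false_mem_zip_weightEncode hlen.symm hne.symm)
  rw [List.zip_swap] at hyx
  exact ⟨hyx, true_false_mem_zip_weightEncode hlen hne⟩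
end

section
/- If balanced binary strings r and s of the same length are both strictly Catalan (hence 1-minimal) and both 2-maximal, and r ≠ s, then for all cyclic shifts i, j, the pair (S^i r, S^j s) contains both coordinate tuples (0,1) and (1,0), i.e., r ✦₁ s. -/
/-!
A strictly Catalan string is the only strictly Catalan string among its rotations: rotating `z`
by `0 < c < ℓ` turns the value of the graph at `ℓ - c` into `G_z(ℓ) - G_z(c) = -G_z(c) < 0`.
Hence every shift of `r` differs from every shift of `s`. Two distinct strings of the same length
with the same number of ones (here `ℓ / 2`, by balance) must each carry a one where the other
carries a zero, which gives both tuples.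
-/

open Classical

/-- The "graph" of a binary string: `G z k = Σ_{i<k} (2 z_i - 1)`. -/
def strGraph (z : List Bool) (k : ℕ) : ℤ :=
  ∑ i ∈ Finset.range k, (if z.getD i false then (1 : ℤ) else -1)

/-- `z` is strictly Catalan if it is balanced and `G_z(k) > 0` for `0 < k < ℓ`. -/
def StrictlyCatalan (z : List Bool) : Prop :=
  strGraph z z.length = 0 ∧ ∀ k, 0 < k → k < z.length → 0 < strGraph z k

/-- `z` is `t`-maximal if exactly `t` positions attain the maximum of its graph. -/
noncomputable def TMaximal (z : List Bool) (t : ℕ) : Prop :=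
  ((Finset.range (z.length + 1)).filter
    (fun i => ∀ j ∈ Finset.range (z.length + 1), strGraph z j ≤ strGraph z i)).card = t

/-- Cyclic shift forward by `i` symbols. -/
def cycShift (i : ℕ) (z : List Bool) : List Bool :=
  z.drop (i % z.length) ++ z.take (i % z.length)

theorem cycShift_eq_rotate (i : ℕ) (z : List Bool) : cycShift i z = z.rotate i :=
  List.rotate_eq_drop_append_take_mod.symm

theorem strGraph_eq_two_mul_count_take_sub {z : List Bool} {k : ℕ} (hk : k ≤ z.length) :
    strGraph z k = 2 * ((z.take k).count true : ℤ) - k := by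
  induction k with
  | zero => simp [strGraph]
  | succ k ih =>
    have hk' : k < z.length := hk
    rw [strGraph, Finset.sum_range_succ, ← strGraph, ih hk'.le, List.take_add_one,
      List.getElem?_eq_getElem hk', List.getD_eq_getElem _ _ hk']
    cases z[k] <;> simp <;> ring

theorem strGraph_rotate {z : List Bool} {c k : ℕ} (hck : c + k ≤ z.length) :
    strGraph (z.rotate c) k = strGraph z (c + k) - strGraph z c := by
  have htake : (z.rotate c).take k = (z.drop c).take k := by
    rw [List.rotate_eq_drop_append_take (by omega), List.take_append_of_le_length (by simp; omega)]
  rw [strGraph_eq_two_mul_count_take_sub (by simp; omega), htake,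
    strGraph_eq_two_mul_count_take_sub hck, strGraph_eq_two_mul_count_take_sub (by omega),
    List.take_add, List.count_append]
  push_cast
  ring

theorem StrictlyCatalan.two_mul_count_true {z : List Bool} (hz : StrictlyCatalan z) :
    2 * z.count true = z.length := by
  have h := hz.1
  rw [strGraph_eq_two_mul_count_take_sub le_rfl, List.take_length] at h
  omega

theorem StrictlyCatalan.not_rotate {z : List Bool} (hz : StrictlyCatalan z) {c : ℕ}
    (hc₀ : 0 < c) (hc : c < z.length) : ¬ StrictlyCatalan (z.rotate c) := by
  intro hrot
  have hneg : strGraph (z.rotate c) (z.length - c) = - strGraph z c := by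
    rw [strGraph_rotate (by omega), Nat.add_sub_cancel' hc.le, hz.1, zero_sub]
  have hpos := hrot.2 (z.length - c) (by omega) (by simp; omega)
  have := hz.2 c hc₀ hc
  omega

theorem StrictlyCatalan.eq_of_isRotated {r s : List Bool} (hr : StrictlyCatalan r)
    (hs : StrictlyCatalan s) (hrs : r ~r s) : r = s := by
  obtain ⟨c, hc, rfl⟩ := List.isRotated_iff_mod.mp hrs
  rcases Nat.eq_zero_or_pos c with rfl | hc₀
  · exact (List.rotate_zero r).symm
  rcases hc.lt_or_eq with hlt | rfl
  · exact absurd hs (hr.not_rotate hc₀ hlt)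
  · exact (List.rotate_length r).symm

theorem count_true_le_of_not_mem_zip {A B : List Bool} (hlen : A.length = B.length)
    (hAB : (false, true) ∉ A.zip B) : B.count true ≤ A.count true := by
  induction A generalizing B with
  | nil => simp [List.eq_nil_of_length_eq_zero hlen.symm]
  | cons a A ih =>
    obtain _ | ⟨b, B⟩ := B
    · simp at hlen
    · simp only [List.zip_cons_cons, List.mem_cons, not_or, Prod.mk.injEq] at hAB
      have := ih (by simpa using hlen) hAB.2
      rw [List.count_cons, List.count_cons]
      cases a <;> cases b <;> simp at hAB ⊢ <;> omega

theorem count_true_lt_of_not_mem_zip {A B : List Bool} (hlen : A.length = B.length)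
    (hAB : (false, true) ∉ A.zip B) (hne : A ≠ B) : B.count true < A.count true := by
  induction A generalizing B with
  | nil => exact absurd (List.eq_nil_of_length_eq_zero hlen.symm).symm hne
  | cons a A ih =>
    obtain _ | ⟨b, B⟩ := B
    · simp at hlen
    · simp only [List.zip_cons_cons, List.mem_cons, not_or, Prod.mk.injEq] at hAB
      have hlen' : A.length = B.length := by simpa using hlen
      have := count_true_le_of_not_mem_zip hlen' hAB.2
      rw [List.count_cons, List.count_cons]
      cases a <;> cases b <;> simp at hAB hne ⊢
      · exact ih hlen' hAB hne
      · omega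
      · exact ih hlen' hAB hne

theorem false_true_mem_zip_of_count_true_eq {A B : List Bool} (hlen : A.length = B.length)
    (hcount : A.count true = B.count true) (hne : A ≠ B) : (false, true) ∈ A.zip B := by
  by_contra hAB
  exact (count_true_lt_of_not_mem_zip hlen hAB hne).ne' hcount

theorem strictlyCatalan_twoMaximal_blacklozenge_one_general (r s : List Bool)
    (hlen : r.length = s.length)
    (hrC : StrictlyCatalan r) (hsC : StrictlyCatalan s)
    (hne : r ≠ s) :
    ∀ i j : ℕ,
      ((false, true) ∈ (cycShift i r).zip (cycShift j s)) ∧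
      ((true, false) ∈ (cycShift i r).zip (cycShift j s)) := by
  intro i j
  simp only [cycShift_eq_rotate]
  have hrot : r.rotate i ≠ s.rotate j := fun h =>
    hne <| hrC.eq_of_isRotated hsC <|
      ((List.IsRotated.forall r i).symm.trans (h ▸ List.IsRotated.forall s j))
  have hlen' : (r.rotate i).length = (s.rotate j).length := by simp [hlen]
  have hcount : (r.rotate i).count true = (s.rotate j).count true := by
    have := hrC.two_mul_count_true
    have := hsC.two_mul_count_true
    rw [(List.rotate_perm r i).count_eq, (List.rotate_perm s j).count_eq]
    omega
  refine ⟨false_true_mem_zip_of_count_true_eq hlen' hcount hrot, ?_⟩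
  rw [← List.zip_swap]
  exact List.mem_map_of_mem
    (false_true_mem_zip_of_count_true_eq hlen'.symm hcount.symm hrot.symm)

/-- Distinct balanced strings of equal length that are strictly Catalan and
`2`-maximal satisfy `r ✦₁ s`: every pair of cyclic shifts realizes both
coordinate tuples `(0,1)` and `(1,0)`. -/
theorem strictlyCatalan_twoMaximal_blacklozenge_one (r s : List Bool)
    (hlen : r.length = s.length)
    (hrC : StrictlyCatalan r) (hsC : StrictlyCatalan s)
    (hrM : TMaximal r 2) (hsM : TMaximal s 2)
    (hne : r ≠ s) :
    ∀ i j : ℕ,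
      ((false, true) ∈ (cycShift i r).zip (cycShift j s)) ∧
      ((true, false) ∈ (cycShift i r).zip (cycShift j s)) :=
  strictlyCatalan_twoMaximal_blacklozenge_one_general r s hlen hrC hsC hne
end

section
/- Any synchronous (n,2)-schedule guaranteeing rendezvous within T time steps must satisfy e·(2^T)! ≥ n; consequently R_s(n,2) = Ω(log log n). -/
/-!
Read the bits of the schedule of `{i, j}` up to time `T` as a colour `c(i, j)` of the edge `ij`,
one of `m = 2^T` colours. If `u < i < j`, the sets `{u, i}` and `{i, j}` can only meet on channel
`i`, where the first hops with bit `1` and the second with bit `0`; so rendezvous forces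
`c(u, i) ≠ c(i, j)`. Then a vertex `v` is determined by the set of colours of the edges `uv`
with `u < v`: for `i < j` the colour `c(i, j)` occurs at `j` but not at `i`. Hence
`n ≤ 2^m ≤ 2·m! ≤ e·m!`, and taking logarithms twice gives `log log n ≤ T`.
-/

open Finset Nat

theorem Finset.card_le_two_pow_of_no_monochromatic_path {ι α : Type*} [LinearOrder ι]
    [Fintype α] (s : Finset ι) (c : ι → ι → α)
    (hc : ∀ u ∈ s, ∀ i ∈ s, ∀ j ∈ s, u < i → i < j → c u i ≠ c i j) :
    #s ≤ 2 ^ Fintype.card α := by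
  classical
  let colorsBelow : ι → Finset α := fun v => {u ∈ s | u < v}.image (c · v)
  have hinj : Set.InjOn colorsBelow s := by
    intro i hi j hj hij
    by_contra hne
    wlog hlt : i < j generalizing i j
    · exact this hj hi hij.symm (Ne.symm hne) ((not_lt.1 hlt).lt_of_ne (Ne.symm hne))
    have hmem : c i j ∈ colorsBelow i := hij ▸ mem_image_of_mem _ (by simpa [hlt] using hi)
    obtain ⟨u, hu, hui⟩ := mem_image.1 hmem
    rw [mem_filter] at hu
    exact hc u hu.1 i hi j hj hu.2 hlt hui
  calc #s ≤ #(univ : Finset (Finset α)) :=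
        card_le_card_of_injOn colorsBelow (fun _ _ => mem_univ _) hinj
    _ = 2 ^ Fintype.card α := by rw [card_univ, Fintype.card_finset]

theorem ite_ne_ite_of_lt_of_lt {α : Type*} [Preorder α] {u i j : α} (hui : u < i) (hij : i < j)
    (b : Bool) : (if b then i else u) ≠ (if b then j else i) := by
  cases b
  · exact hui.ne
  · exact hij.ne

theorem schedule_ne_of_rendezvous {σ : ℕ → ℕ → ℕ → Bool} {T u i j : ℕ} (hui : u < i)
    (hij : i < j) (h : ∃ t < T, (if σ u i t then i else u) = (if σ i j t then j else i)) :
    (fun t : Fin T => σ u i t) ≠ fun t : Fin T => σ i j t := by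
  obtain ⟨t, ht, hmeet⟩ := h
  intro hsame
  rw [show σ u i t = σ i j t from congrFun hsame ⟨t, ht⟩] at hmeet
  exact ite_ne_ite_of_lt_of_lt hui hij _ hmeet

theorem le_two_pow_two_pow_of_rendezvous {n T : ℕ} (σ : ℕ → ℕ → ℕ → Bool)
    (h : ∀ i j i' j' : ℕ, 1 ≤ i → i < j → j ≤ n → 1 ≤ i' → i' < j' → j' ≤ n →
      (({i, j} : Finset ℕ) ∩ {i', j'}).Nonempty →
      ∃ t < T, (if σ i j t then j else i) = (if σ i' j' t then j' else i')) :
    n ≤ 2 ^ 2 ^ T := by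
  have hcard := (Icc 1 n).card_le_two_pow_of_no_monochromatic_path
    (fun u v (t : Fin T) => σ u v t) fun u hu i hi j hj hui hij => by
      rw [mem_Icc] at hu hi hj
      exact schedule_ne_of_rendezvous hui hij
        (h u i i j hu.1 hui hi.2 hi.1 hij hj.2 ⟨i, by simp⟩)
  simpa using hcard

theorem two_pow_le_two_mul_factorial (m : ℕ) : 2 ^ m ≤ 2 * m ! := by
  cases m with
  | zero => simp
  | succ k =>
    rw [pow_succ', add_comm]
    simpa using Nat.mul_le_mul_left 2 (@Nat.factorial_mul_pow_le_factorial 1 k)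

theorem Real.log_log_le_of_le_two_pow_two_pow {x : ℝ} {T : ℕ} (hx1 : 1 ≤ x)
    (hx : x ≤ 2 ^ 2 ^ T) : Real.log (Real.log x) ≤ T := by
  have hlog2 : Real.log 2 ≤ 1 := by linarith [Real.log_le_sub_one_of_pos (zero_lt_two' ℝ)]
  rcases (Real.log_nonneg hx1).eq_or_lt with hzero | hpos
  · rw [← hzero, Real.log_zero]
    positivity
  have hlog : Real.log x ≤ 2 ^ T :=
    calc Real.log x ≤ Real.log (2 ^ 2 ^ T) := Real.log_le_log (by linarith) hx
      _ = 2 ^ T * Real.log 2 := by rw [Real.log_pow]; push_cast; ring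
      _ ≤ 2 ^ T := mul_le_of_le_one_right (by positivity) hlog2
  calc Real.log (Real.log x) ≤ Real.log (2 ^ T) := Real.log_le_log hpos hlog
    _ = T * Real.log 2 := Real.log_pow 2 T
    _ ≤ T := mul_le_of_le_one_right T.cast_nonneg hlog2

/-- Any synchronous `(n,2)`-schedule (a bit string in `{0,1}^T` for each pair
`i < j` in `[n]`, where `0` means hopping on the smaller channel and `1` on the
larger) that guarantees rendezvous within `T` steps for every pair of
overlapping two-element sets must satisfy `e·(2^T)! ≥ n`; consequently
`R_s(n,2) = Ω(log log n)`. -/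
theorem lower_bound_size_two : ∃ c : ℝ, 0 < c ∧
    ∀ (n T : ℕ) (σ : ℕ → ℕ → ℕ → Bool),
      (∀ i j i' j' : ℕ, 1 ≤ i → i < j → j ≤ n → 1 ≤ i' → i' < j' → j' ≤ n →
        (({i, j} : Finset ℕ) ∩ {i', j'}).Nonempty →
        ∃ t < T, (if σ i j t then j else i) = (if σ i' j' t then j' else i')) →
      ((n : ℝ) ≤ Real.exp 1 * (Nat.factorial (2 ^ T)) ∧
        (3 ≤ n → c * Real.log (Real.log n) ≤ (T : ℝ))) := by
  refine ⟨1, one_pos, fun n T σ h => ?_⟩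
  have hn : (n : ℝ) ≤ 2 ^ 2 ^ T := by exact_mod_cast le_two_pow_two_pow_of_rendezvous σ h
  refine ⟨?_, fun hn3 => ?_⟩
  · have he : (2 : ℝ) ≤ Real.exp 1 := by linarith [Real.add_one_le_exp (1 : ℝ)]
    calc (n : ℝ) ≤ 2 ^ 2 ^ T := hn
      _ ≤ 2 * (2 ^ T) ! := by exact_mod_cast two_pow_le_two_mul_factorial (2 ^ T)
      _ ≤ Real.exp 1 * (2 ^ T) ! := by gcongr
  · rw [one_mul]
    exact Real.log_log_le_of_le_two_pow_two_pow (by exact_mod_cast (by omega : 1 ≤ n)) hn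
end

section
/- If the edges of the complete graph K_n are colored with m colors and n ≥ e·m!, then there exists a monochromatic triangle; in particular there exist i < j < k such that edges {i,j} and {j,k} receive the same color. -/
/-!
Schur's argument: among more than `schurBound m` points, the least point `v` has more than
`m * schurBound (m - 1)` later neighbours, so by pigeonhole more than `schurBound (m - 1)` of them
are joined to `v` in one colour `c`. Either two of these are joined in colour `c`, closing a
triangle with `v`, or the pairs among them use only the other `m - 1` colours and induction applies.
Since `schurBound m = ∑_{k ≤ m} m!/k! < e·m!`, this covers every `n ≥ e·m!`.
-/

open Finset Nat

def schurBound : ℕ → ℕ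
  | 0 => 1
  | m + 1 => (m + 1) * schurBound m + 1

lemma cast_schurBound (m : ℕ) :
    (schurBound m : ℝ) = m ! * ∑ k ∈ range (m + 1), (1 : ℝ) / k ! := by
  induction m with
  | zero => simp [schurBound]
  | succ m ih =>
    rw [schurBound, sum_range_succ, Nat.cast_add, Nat.cast_mul, ih, factorial_succ]
    push_cast
    field_simp

lemma schurBound_lt_exp_one_mul_factorial (m : ℕ) :
    (schurBound m : ℝ) < Real.exp 1 * m ! := by
  have hexp := Real.sum_le_exp_of_nonneg zero_le_one (m + 2)
  simp only [one_pow, sum_range_succ _ (m + 1)] at hexp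
  have hlast : (0 : ℝ) < 1 / (m + 1)! := by positivity
  rw [cast_schurBound, mul_comm]
  gcongr
  linarith

section

variable {α κ : Type*} [LinearOrder α]

def HasMonoTriangle (χ : α → α → κ) (S : Finset α) : Prop :=
  ∃ i ∈ S, ∃ j ∈ S, ∃ k ∈ S, i < j ∧ j < k ∧ χ i j = χ j k ∧ χ i j = χ i k

lemma HasMonoTriangle.mono {χ : α → α → κ} {S T : Finset α} (h : HasMonoTriangle χ S)
    (hST : S ⊆ T) : HasMonoTriangle χ T := by
  obtain ⟨i, hi, j, hj, k, hk, hij, hjk, h₁, h₂⟩ := h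
  exact ⟨i, hST hi, j, hST hj, k, hST hk, hij, hjk, h₁, h₂⟩

theorem hasMonoTriangle_of_schurBound_lt [DecidableEq κ] (χ : α → α → κ) (m : ℕ)
    (C : Finset κ) (S : Finset α) (hχ : ∀ i ∈ S, ∀ j ∈ S, i < j → χ i j ∈ C) (hC : #C ≤ m)
    (hS : schurBound m < #S) : HasMonoTriangle χ S := by
  induction m generalizing C S with
  | zero =>
    obtain ⟨i, hi, j, hj, hij⟩ := one_lt_card.mp hS
    rcases hij.lt_or_gt with h | h
    · simpa [card_eq_zero.mp (Nat.le_zero.mp hC)] using hχ i hi j hj h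
    · simpa [card_eq_zero.mp (Nat.le_zero.mp hC)] using hχ j hj i hi h
  | succ m ih =>
    have hSne : S.Nonempty := card_pos.mp (by omega)
    set v := S.min' hSne
    have hv : v ∈ S := S.min'_mem hSne
    have hlater : ∀ u ∈ S.erase v, v < u := fun u hu => S.min'_lt_of_mem_erase_min' hSne hu
    have hfan : #C * schurBound m < #(S.erase v) := by
      rw [card_erase_of_mem hv]
      have := Nat.mul_le_mul_right (schurBound m) hC
      rw [schurBound] at hS
      omega
    obtain ⟨c, hc, hP⟩ := exists_lt_card_fiber_of_mul_lt_card_of_maps_to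
      (fun u hu => hχ v hv u (mem_of_mem_erase hu) (hlater u hu)) hfan
    set P := (S.erase v).filter (fun u => χ v u = c)
    have hPS : P ⊆ S := (filter_subset _ _).trans (erase_subset _ _)
    have hvP : ∀ u ∈ P, v < u ∧ χ v u = c := fun u hu =>
      ⟨hlater u (mem_of_mem_filter u hu), (mem_filter.mp hu).2⟩
    by_cases hmono : ∃ u ∈ P, ∃ w ∈ P, u < w ∧ χ u w = c
    · obtain ⟨u, hu, w, hw, huw, hc'⟩ := hmono
      exact ⟨v, hv, u, hPS hu, w, hPS hw, (hvP u hu).1, huw,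
        by rw [(hvP u hu).2, hc'], by rw [(hvP u hu).2, (hvP w hw).2]⟩
    · push Not at hmono
      refine (ih (C.erase c) P (fun i hi j hj hij => ?_) ?_ hP).mono hPS
      · exact mem_erase.mpr ⟨hmono i hi j hj hij, hχ i (hPS hi) j (hPS hj) hij⟩
      · rw [card_erase_of_mem hc]
        omega

end

theorem monochromatic_triangle_general (n m : ℕ) (χ : ℕ → ℕ → Fin m)
    (hn : Real.exp 1 * (Nat.factorial m) ≤ (n : ℝ)) :
    ∃ i j k : ℕ, 1 ≤ i ∧ i < j ∧ j < k ∧ k ≤ n ∧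
      χ i j = χ j k ∧ χ i j = χ i k := by
  have hbound : schurBound m < #(Icc 1 n) := by
    rw [Nat.card_Icc, Nat.add_sub_cancel]
    exact_mod_cast (schurBound_lt_exp_one_mul_factorial m).trans_le hn
  obtain ⟨i, hi, j, -, k, hk, hij, hjk, h₁, h₂⟩ := hasMonoTriangle_of_schurBound_lt χ m univ
    (Icc 1 n) (fun _ _ _ _ _ => mem_univ _) (card_univ.trans (Fintype.card_fin m)).le hbound
  exact ⟨i, j, k, (mem_Icc.mp hi).1, hij, hjk, (mem_Icc.mp hk).2, h₁, h₂⟩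

/-- If the edges of `K_n` are colored with `m` colors and `n ≥ e·m!`, then there
is a monochromatic triangle; in particular there are `i < j < k` such that the
edges `{i,j}` and `{j,k}` get the same color. -/
theorem monochromatic_triangle (n m : ℕ) (χ : ℕ → ℕ → Fin m)
    (hχ : ∀ i j, χ i j = χ j i)
    (hn : Real.exp 1 * (Nat.factorial m) ≤ (n : ℝ)) :
    ∃ i j k : ℕ, 1 ≤ i ∧ i < j ∧ j < k ∧ k ≤ n ∧
      χ i j = χ j k ∧ χ i j = χ i k :=
  monochromatic_triangle_general n m χ hn
end

section
/- Let 1 ≤ α ≤ k and n ≥ k^{2α}. Then any synchronous (n,k)-schedule requires at least αk time steps for rendezvous: R_s(n,k) ≥ αk. -/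
/-!
Suppose `T < α k`. Cut `[n]` into `n / k` disjoint blocks of `k` channels. In each block some
channel `c` is played fewer than `α` times before `T`; enlarge its set of occurrence times to an
`(α - 1)`-subset of `[0, α k - 1)`. As `n ≥ k ^ (2α)`, the pigeonhole principle gives `k` blocks
sharing the same enlarged set `Y`. The set `B` of their rare channels is again a `k`-set, and it
meets the block of `c` only in `c`, so its rendezvous with that block happens at a time when the
block plays `c`, i.e. at a time in `Y`; and these times are distinct, since `B` plays a different
channel at each of them. Hence `k ≤ |Y| = α - 1`, a contradiction.
-/

namespace Rendezvous

open Finset Function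

def block (k i : ℕ) : Finset ℕ := Icc (i * k + 1) (i * k + k)

theorem card_block (k i : ℕ) : (block k i).card = k := by
  simp [block]

theorem block_subset_Icc {n k i : ℕ} (hi : i < n / k) : block k i ⊆ Icc 1 n := by
  have hk : 0 < k := Nat.pos_of_ne_zero (by rintro rfl; simp at hi)
  have hik : (i + 1) * k ≤ n := (Nat.le_div_iff_mul_le hk).1 hi
  intro x hx
  simp only [block, mem_Icc] at hx ⊢
  constructor <;> nlinarith

theorem div_eq_of_mem_block {k i x : ℕ} (hx : x ∈ block k i) : (x - 1) / k = i := by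
  simp only [block, mem_Icc] at hx
  exact Nat.div_eq_of_lt_le (by omega) (by rw [add_mul, one_mul]; omega)

theorem pairwise_disjoint_block (k : ℕ) : Pairwise (Disjoint on (block k)) := fun _ _ hij ↦
  disjoint_left.2 fun _ hi hj ↦ hij ((div_eq_of_mem_block hi).symm.trans (div_eq_of_mem_block hj))

variable {ι κ : Type*}

theorem injOn_of_pairwiseDisjoint {A : κ → Finset ι} {I : Finset κ} {c : κ → ι}
    (hdisj : (I : Set κ).PairwiseDisjoint A) (hc : ∀ i ∈ I, c i ∈ A i) : Set.InjOn c I :=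
  fun i hi j hj hij ↦ hdisj.elim_finset hi hj (c i) (hc i hi) (hij ▸ hc j hj)

variable [DecidableEq ι]

def occurrences (f : ℕ → ι) (T : ℕ) (c : ι) : Finset ℕ := {t ∈ range T | f t = c}

theorem occurrences_subset_range (f : ℕ → ι) (T : ℕ) (c : ι) : occurrences f T c ⊆ range T :=
  filter_subset _ _

theorem exists_card_occurrences_lt {A : Finset ι} {T α : ℕ} (f : ℕ → ι) (hT : T < α * A.card) :
    ∃ c ∈ A, (occurrences f T c).card < α :=
  exists_card_fiber_lt_of_card_lt_mul (by rwa [card_range, mul_comm])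

theorem card_le_card_biUnion_occurrences {A : κ → Finset ι} {I : Finset κ} {c : κ → ι}
    {σ : Finset ι → ℕ → ι} {T : ℕ}
    (hdisj : (I : Set κ).PairwiseDisjoint A) (hc : ∀ i ∈ I, c i ∈ A i)
    (hσA : ∀ i ∈ I, ∀ t, σ (A i) t ∈ A i) (hσB : ∀ t, σ (I.image c) t ∈ I.image c)
    (hrdv : ∀ i ∈ I, ∃ t < T, σ (A i) t = σ (I.image c) t) :
    I.card ≤ (I.biUnion fun i ↦ occurrences (σ (A i)) T (c i)).card := by
  choose! τ hτT hτ using hrdv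
  have hτc : ∀ i ∈ I, σ (I.image c) (τ i) = c i := by
    intro i hi
    obtain ⟨j, hj, hjτ⟩ := mem_image.1 (hσB (τ i))
    have hji : j = i :=
      hdisj.elim_finset hj hi _ (hjτ ▸ hc j hj) (hτ i hi ▸ hσA i hi (τ i))
    rw [← hjτ, hji]
  refine card_le_card_of_injOn τ (fun i hi ↦ mem_biUnion.2 ⟨i, hi, ?_⟩) fun i hi j hj hij ↦ ?_
  · simp only [occurrences, mem_filter, mem_range]
    exact ⟨hτT i hi, (hτ i hi).trans (hτc i hi)⟩
  · exact injOn_of_pairwiseDisjoint hdisj hc hi hj (by rw [← hτc i hi, ← hτc j hj, hij])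

theorem exists_card_lt_filter_subset {β : Type*} [DecidableEq β] {J : Finset κ} {s : κ → Finset β}
    {U : Finset β} {r m : ℕ} (hsU : ∀ i ∈ J, s i ⊆ U) (hsr : ∀ i ∈ J, (s i).card ≤ r)
    (hrU : r ≤ U.card) (hJ : U.card.choose r * m < J.card) :
    ∃ Y : Finset β, Y.card = r ∧ m < {i ∈ J | s i ⊆ Y}.card := by
  have hext : ∀ i ∈ J, ∃ S, s i ⊆ S ∧ S ⊆ U ∧ S.card = r := fun i hi ↦
    exists_subsuperset_card_eq (hsU i hi) (hsr i hi) hrU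
  choose! S hsS hSU hSr using hext
  obtain ⟨Y, hY, hmY⟩ := exists_lt_card_fiber_of_mul_lt_card_of_maps_to
    (fun i hi ↦ mem_powersetCard.2 ⟨hSU i hi, hSr i hi⟩) (by rwa [card_powersetCard])
  refine ⟨Y, (mem_powersetCard.1 hY).2, hmY.trans_le (card_le_card fun i hi ↦ ?_)⟩
  obtain ⟨hiJ, rfl⟩ := mem_filter.1 hi
  exact mem_filter.2 ⟨hiJ, hsS i hiJ⟩

theorem choose_mul_pred_lt_div {n k α : ℕ} (hα : 0 < α) (hαk : α ≤ k) (hn : k ^ (2 * α) ≤ n) :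
    (α * k - 1).choose (α - 1) * (k - 1) < n / k := by
  obtain ⟨a, rfl⟩ : ∃ a, α = a + 1 := ⟨α - 1, by omega⟩
  have hk : 0 < k := by omega
  have hak : (a + 1) * k - 1 ≤ k ^ 2 := by have := Nat.mul_le_mul_right k hαk; rw [sq]; omega
  calc ((a + 1) * k - 1).choose a * (k - 1)
      ≤ (k ^ 2) ^ a * (k - 1) := by
        gcongr
        exact (Nat.choose_le_pow _ _).trans (Nat.pow_le_pow_left hak a)
    _ < (k ^ 2) ^ a * k := Nat.mul_lt_mul_of_pos_left (by omega) (by positivity)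
    _ ≤ n / k := (Nat.le_div_iff_mul_le hk).2 <| by
        convert hn using 1; ring

end Rendezvous

open Finset Rendezvous in
theorem lower_bound_synchronous_general (n k α T : ℕ) (hαk : α ≤ k)
    (hn : k ^ (2 * α) ≤ n)
    (σ : Finset ℕ → ℕ → ℕ)
    (hmem : ∀ A : Finset ℕ, A ⊆ Finset.Icc 1 n → A.card = k → ∀ t, σ A t ∈ A)
    (hrdv : ∀ A B : Finset ℕ, A ⊆ Finset.Icc 1 n → B ⊆ Finset.Icc 1 n →
      A.card = k → B.card = k → (A ∩ B).Nonempty → ∃ t < T, σ A t = σ B t) :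
    α * k ≤ T := by
  by_contra! hT
  have hα : 0 < α := Nat.pos_of_ne_zero (by rintro rfl; omega)
  have hk : 0 < k := hα.trans_le hαk
  have hrare : ∀ i ∈ range (n / k), ∃ c ∈ block k i, (occurrences (σ (block k i)) T c).card < α :=
    fun i _ ↦ exists_card_occurrences_lt _ (by rwa [card_block])
  choose! c hcA hc using hrare
  obtain ⟨Y, hY, hkY⟩ := exists_card_lt_filter_subset (U := range (α * k - 1)) (m := k - 1)
    (fun i _ ↦ (occurrences_subset_range _ _ _).trans (range_subset_range.2 (by omega)))
    (fun i hi ↦ Nat.le_sub_one_of_lt (hc i hi))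
    (by rw [card_range]; exact Nat.sub_le_sub_right (Nat.le_mul_of_pos_right α hk) 1)
    (by simpa using choose_mul_pred_lt_div hα hαk hn)
  obtain ⟨I, hIsub, hI⟩ := exists_subset_card_eq (show k ≤ _ from Nat.le_of_pred_lt hkY)
  have hIJ : ∀ i ∈ I, i < n / k := fun i hi ↦ mem_range.1 (mem_filter.1 (hIsub hi)).1
  have hcI : ∀ i ∈ I, c i ∈ block k i := fun i hi ↦ hcA i (mem_range.2 (hIJ i hi))
  have hdisj : (I : Set ℕ).PairwiseDisjoint (block k) := (pairwise_disjoint_block k).set_pairwise _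
  have hblock : ∀ i ∈ I, block k i ⊆ Icc 1 n := fun i hi ↦ block_subset_Icc (hIJ i hi)
  have hBsub : I.image c ⊆ Icc 1 n := image_subset_iff.2 fun i hi ↦ hblock i hi (hcI i hi)
  have hBcard : (I.image c).card = k :=
    (card_image_of_injOn (injOn_of_pairwiseDisjoint hdisj hcI)).trans hI
  have hIle := card_le_card_biUnion_occurrences hdisj hcI
    (fun i hi ↦ hmem _ (hblock i hi) (card_block k i)) (hmem _ hBsub hBcard)
    (fun i hi ↦ hrdv _ _ (hblock i hi) hBsub (card_block k i) hBcard
      ⟨c i, mem_inter.2 ⟨hcI i hi, mem_image_of_mem c hi⟩⟩)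
  have hYle := card_le_card (biUnion_subset.2 fun i hi ↦ (mem_filter.1 (hIsub hi)).2 :
    (I.biUnion fun i ↦ occurrences (σ (block k i)) T (c i)) ⊆ Y)
  omega

/-- Let `1 ≤ α ≤ k` and `n ≥ k^(2α)`. Any `(n,k)`-schedule guaranteeing
synchronous rendezvous within `T` steps for every pair of overlapping
`k`-subsets of `[n]` must have `T ≥ αk`. -/
theorem lower_bound_synchronous (n k α T : ℕ) (hα1 : 1 ≤ α) (hαk : α ≤ k)
    (hn : k ^ (2 * α) ≤ n)
    (σ : Finset ℕ → ℕ → ℕ)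
    (hmem : ∀ A : Finset ℕ, A ⊆ Finset.Icc 1 n → A.card = k → ∀ t, σ A t ∈ A)
    (hrdv : ∀ A B : Finset ℕ, A ⊆ Finset.Icc 1 n → B ⊆ Finset.Icc 1 n →
      A.card = k → B.card = k → (A ∩ B).Nonempty → ∃ t < T, σ A t = σ B t) :
    α * k ≤ T :=
  lower_bound_synchronous_general n k α T hαk hn σ hmem hrdv
end
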